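/- arXiv:2101.05441 — 2 statements merged into one kernel-verified Lean document; each statement's English description precedes it below -/
import Mathlib

section
/- Let M be an atomic Puiseux monoid (an additive submonoid of the nonnegative rationals). Then M contains both a purely long and a purely short atom if and only if M has exactly two atoms, in which case the smaller atom is the unique purely long atom and the larger atom is the unique purely short atom. -/
open Multiset

namespace LF

variable (M : AddSubmonoid ℚ)

/-- An atom of the additive monoid `M`. -/
def IsAtomOf (a : ℚ) : Prop :=
  a ∈ M ∧ a ≠ 0 ∧ ∀ u ∈ M, ∀ v ∈ M, a = u + v → u = 0 ∨ v = 0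

/-- Factorizations of `x` in `M`: multisets of atoms summing to `x`. -/
def FactorsOf (x : ℚ) : Set (Multiset ℚ) :=
  {s | (∀ a ∈ s, IsAtomOf M a) ∧ s.sum = x}

/-- `M` is atomic. -/
def Atomic : Prop := ∀ x ∈ M, x ≠ 0 → (FactorsOf M x).Nonempty

/-- `M` is length-factorial. -/
def LengthFactorial : Prop :=
  ∀ x ∈ M, ∀ s ∈ FactorsOf M x, ∀ t ∈ FactorsOf M x, card s = card t → s = t

/-- `M` is factorial. -/
def Factorial : Prop := ∀ x ∈ M, ∃! s, s ∈ FactorsOf M x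

/-- A factorization relation in `M`. -/
def IsRel (z1 z2 : Multiset ℚ) : Prop :=
  (∀ a ∈ z1, IsAtomOf M a) ∧ (∀ a ∈ z2, IsAtomOf M a) ∧ z1.sum = z2.sum

/-- An irredundant pair: no common atom. -/
def Irredundant (z1 z2 : Multiset ℚ) : Prop := ∀ a, a ∈ z1 → a ∉ z2

/-- `p` is a prime element of `M` (divisibility taken in `M`). -/
def IsPrimeElem (p : ℚ) : Prop :=
  p ∈ M ∧ p ≠ 0 ∧ ∀ a ∈ M, ∀ b ∈ M, (∃ c ∈ M, a + b = p + c) →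
    (∃ c ∈ M, a = p + c) ∨ (∃ c ∈ M, b = p + c)

/-- A purely long atom of `M`. -/
def PurelyLong (a : ℚ) : Prop :=
  IsAtomOf M a ∧ ¬ IsPrimeElem M a ∧
    ∀ z1 z2, IsRel M z1 z2 → Irredundant z1 z2 → card z1 ≠ card z2 →
      a ∈ z1 → card z2 < card z1

/-- A purely short atom of `M`. -/
def PurelyShort (a : ℚ) : Prop :=
  IsAtomOf M a ∧ ¬ IsPrimeElem M a ∧
    ∀ z1 z2, IsRel M z1 z2 → Irredundant z1 z2 → card z1 ≠ card z2 →
      a ∈ z1 → card z1 < card z2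

/-! Two positive rationals are always commensurable, so two distinct atoms `x ≠ y` satisfy
`p • x = q • y` with `p ≠ q`, an unbalanced irredundant relation.

If `a` is purely long, `b` purely short and `c` is a third atom, write `p • a = q • c` and
`n • b = m • c`. Adding `k` copies of the first relation to `l` copies of the second gives an
irredundant relation containing both `a` and `b`, which must therefore be balanced:
`k p + l n = k q + l m`. Taking `(k, l) = (1, 1)` and `(2, 1)` forces `p = q`, i.e. `a = c`.
So every atom is `a` or `b`; and `a ≠ b`, since the only atom of an atomic Puiseux monoid
is prime.

Conversely, if the atoms are exactly `a < b`, every irredundant relation is `p • a = q • b`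
with `q < p`. Neither atom is prime: a prime dividing `q • c` divides `c`, and an atom
divisible by an atom equals it. -/

section

variable {M}

theorem IsAtomOf.pos (hpos : ∀ x ∈ M, 0 ≤ x) {a : ℚ} (ha : IsAtomOf M a) : 0 < a :=
  (hpos a ha.1).lt_of_ne' ha.2.1

theorem exists_nat_mul_eq_nat_mul {x y : ℚ} (hx : 0 < x) (hy : 0 < y) :
    ∃ m n : ℕ, 0 < m ∧ 0 < n ∧ (m : ℚ) * x = n * y := by
  set q := x / y
  have hnum : 0 < q.num := Rat.num_pos.mpr (div_pos hx hy)
  have hcast : (q.num.toNat : ℚ) = q.num := by exact_mod_cast Int.toNat_of_nonneg hnum.le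
  refine ⟨q.den, q.num.toNat, q.den_pos, by omega, ?_⟩
  rw [hcast, ← Rat.mul_den_eq_num, mul_comm, mul_right_comm, div_mul_cancel₀ x hy.ne']

theorem sum_eq_card_mul {s : Multiset ℚ} {a : ℚ} (h : ∀ c ∈ s, c = a) :
    s.sum = card s * a := by
  rw [eq_replicate_card.mpr h, sum_replicate, card_replicate, nsmul_eq_mul]

theorem card_eq_of_purelyLong_of_purelyShort {a b : ℚ} (ha : PurelyLong M a)
    (hb : PurelyShort M b) {z1 z2 : Multiset ℚ} (hrel : IsRel M z1 z2)
    (hirr : Irredundant z1 z2) (haz : a ∈ z1) (hbz : b ∈ z1) : card z1 = card z2 := by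
  by_contra hne
  exact (ha.2.2 z1 z2 hrel hirr hne haz).asymm (hb.2.2 z1 z2 hrel hirr hne hbz)

theorem eq_or_eq_of_purelyLong_of_purelyShort (hpos : ∀ x ∈ M, 0 ≤ x) {a b c : ℚ}
    (ha : PurelyLong M a) (hb : PurelyShort M b) (hc : IsAtomOf M c) : c = a ∨ c = b := by
  by_contra! hne
  obtain ⟨p, q, hp, -, hpq⟩ := exists_nat_mul_eq_nat_mul (ha.1.pos hpos) (hc.pos hpos)
  obtain ⟨n, m, hn, -, hnm⟩ := exists_nat_mul_eq_nat_mul (hb.1.pos hpos) (hc.pos hpos)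
  have balanced (k l : ℕ) (hk : 0 < k) (hl : 0 < l) : k * p + l * n = k * q + l * m := by
    have hrel : IsRel M (replicate (k * p) a + replicate (l * n) b)
        (replicate (k * q + l * m) c) := by
      refine ⟨fun x hx => ?_, fun x hx => eq_of_mem_replicate hx ▸ hc, ?_⟩
      · rcases mem_add.mp hx with hx | hx
        · exact eq_of_mem_replicate hx ▸ ha.1
        · exact eq_of_mem_replicate hx ▸ hb.1
      · simp only [sum_add, sum_replicate, nsmul_eq_mul]
        push_cast
        linear_combination (k : ℚ) * hpq + (l : ℚ) * hnm
    have hirr : Irredundant (replicate (k * p) a + replicate (l * n) b)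
        (replicate (k * q + l * m) c) := by
      intro x hx hxc
      rw [eq_of_mem_replicate hxc] at hx
      rcases mem_add.mp hx with hx | hx
      exacts [hne.1 (eq_of_mem_replicate hx), hne.2 (eq_of_mem_replicate hx)]
    simpa using card_eq_of_purelyLong_of_purelyShort ha hb hrel hirr
      (mem_add.mpr (Or.inl (mem_replicate.mpr ⟨by positivity, rfl⟩)))
      (mem_add.mpr (Or.inr (mem_replicate.mpr ⟨by positivity, rfl⟩)))
  have hpq' : p = q := by linarith [balanced 1 1 one_pos one_pos, balanced 2 1 two_pos one_pos]
  subst hpq'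
  exact hne.1 (mul_left_cancel₀ (by positivity) hpq).symm

theorem IsPrimeElem.dvd_of_dvd_nat_mul (hpos : ∀ x ∈ M, 0 ≤ x) {p c : ℚ}
    (hp : IsPrimeElem M p) (hc : c ∈ M) :
    ∀ k : ℕ, (∃ d ∈ M, (k : ℚ) * c = p + d) → ∃ d ∈ M, c = p + d
  | 0, ⟨d, hd, h⟩ => by
    rw [Nat.cast_zero, zero_mul] at h
    linarith [(hpos p hp.1).lt_of_ne' hp.2.1, hpos d hd]
  | k + 1, ⟨d, hd, h⟩ => by
    refine (hp.2.2 c hc _ (AddSubmonoid.nsmul_mem M hc k) ⟨d, hd, ?_⟩).elim id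
      (fun hk => dvd_of_dvd_nat_mul hpos hp hc k (by rwa [nsmul_eq_mul] at hk))
    rw [nsmul_eq_mul, ← h]
    push_cast
    ring

theorem IsPrimeElem.eq_of_isAtomOf (hpos : ∀ x ∈ M, 0 ≤ x) {p c : ℚ} (hp : IsPrimeElem M p)
    (hc : IsAtomOf M c) : c = p := by
  obtain ⟨k, l, hk, -, hkl⟩ :=
    exists_nat_mul_eq_nat_mul ((hpos p hp.1).lt_of_ne' hp.2.1) (hc.pos hpos)
  obtain ⟨k, rfl⟩ := Nat.exists_eq_add_one_of_ne_zero hk.ne'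
  obtain ⟨d, hd, hcd⟩ := hp.dvd_of_dvd_nat_mul hpos hc.1 l
    ⟨k * p, by simpa using AddSubmonoid.nsmul_mem M hp.1 k, by push_cast at hkl; linarith⟩
  rcases hc.2.2 p hp.1 d hd hcd with h | h
  · exact absurd h hp.2.1
  · rw [hcd, h, add_zero]

theorem exists_eq_nat_mul_of_forall_isAtomOf_eq (hat : Atomic M) {a : ℚ}
    (h : ∀ c, IsAtomOf M c → c = a) {x : ℚ} (hx : x ∈ M) : ∃ i : ℕ, x = i * a := by
  by_cases hx0 : x = 0
  · exact ⟨0, by simp [hx0]⟩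
  obtain ⟨s, hs, rfl⟩ := hat x hx hx0
  exact ⟨card s, sum_eq_card_mul fun c hc => h c (hs c hc)⟩

theorem isPrimeElem_of_forall_isAtomOf_eq (hat : Atomic M) {a : ℚ} (ha : IsAtomOf M a)
    (h : ∀ c, IsAtomOf M c → c = a) : IsPrimeElem M a := by
  have nat_mul_mem (i : ℕ) : (i : ℚ) * a ∈ M := by
    simpa using AddSubmonoid.nsmul_mem M ha.1 i
  refine ⟨ha.1, ha.2.1, fun x hx y hy ⟨z, hz, hxy⟩ => ?_⟩
  obtain ⟨i, rfl⟩ := exists_eq_nat_mul_of_forall_isAtomOf_eq hat h hx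
  obtain ⟨j, rfl⟩ := exists_eq_nat_mul_of_forall_isAtomOf_eq hat h hy
  obtain ⟨k, rfl⟩ := exists_eq_nat_mul_of_forall_isAtomOf_eq hat h hz
  have hijk : ((i + j : ℕ) : ℚ) * a = ((1 + k : ℕ) : ℚ) * a := by
    push_cast
    linarith
  replace hijk : i + j = 1 + k := by exact_mod_cast mul_right_cancel₀ ha.2.1 hijk
  rcases Nat.eq_zero_or_pos i with rfl | hi
  · refine Or.inr ⟨((j - 1 : ℕ) : ℚ) * a, nat_mul_mem _, ?_⟩
    push_cast [Nat.cast_sub (by omega : 1 ≤ j)]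
    ring
  · refine Or.inl ⟨((i - 1 : ℕ) : ℚ) * a, nat_mul_mem _, ?_⟩
    push_cast [Nat.cast_sub hi]
    ring

theorem PurelyLong.ne_of_purelyShort (hpos : ∀ x ∈ M, 0 ≤ x) (hat : Atomic M) {a b : ℚ}
    (ha : PurelyLong M a) (hb : PurelyShort M b) : a ≠ b := by
  rintro rfl
  exact ha.2.1 (isPrimeElem_of_forall_isAtomOf_eq hat ha.1 fun c hc =>
    (eq_or_eq_of_purelyLong_of_purelyShort hpos ha hb hc).elim id id)

theorem setOf_isAtomOf_eq_pair (hpos : ∀ x ∈ M, 0 ≤ x) {a b : ℚ} (ha : PurelyLong M a)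
    (hb : PurelyShort M b) : {c | IsAtomOf M c} = {a, b} := by
  ext c
  refine ⟨eq_or_eq_of_purelyLong_of_purelyShort hpos ha hb, ?_⟩
  rintro (rfl | rfl)
  exacts [ha.1, hb.1]

theorem card_mul_eq_card_mul_of_forall_isAtomOf (hpos : ∀ x ∈ M, 0 ≤ x) {x y : ℚ}
    (h2 : ∀ c, IsAtomOf M c → c = x ∨ c = y) {z1 z2 : Multiset ℚ} (hrel : IsRel M z1 z2)
    (hirr : Irredundant z1 z2) (hx : x ∈ z1) : (card z1 : ℚ) * x = card z2 * y := by
  have hz2 : ∀ c ∈ z2, c = y := fun c hc =>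
    (h2 c (hrel.2.1 c hc)).resolve_left (by rintro rfl; exact hirr c hx hc)
  have hz1 : ∀ c ∈ z1, c = x := by
    intro c hc
    refine (h2 c (hrel.1 c hc)).resolve_right ?_
    rintro rfl
    -- then `z2` contains neither `x` nor `y`, so `z1` would sum to `0`
    have hz2_zero : z2 = 0 := eq_zero_of_forall_notMem fun d hd => hirr d (hz2 d hd ▸ hc) hd
    have hsum : z1.sum = 0 := by rw [hrel.2.2, hz2_zero, sum_zero]
    have := single_le_sum (fun d hd => hpos d (hrel.1 d hd).1) x hx
    linarith [(hrel.1 x hx).pos hpos]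
  rw [← sum_eq_card_mul hz1, ← sum_eq_card_mul hz2, hrel.2.2]

theorem purelyLong_and_purelyShort_of_setOf_isAtomOf_eq_pair (hpos : ∀ x ∈ M, 0 ≤ x)
    {a b : ℚ} (hab : a < b) (hset : {c | IsAtomOf M c} = {a, b}) :
    PurelyLong M a ∧ PurelyShort M b := by
  have h2 (c : ℚ) (hc : IsAtomOf M c) : c = a ∨ c = b := (Set.ext_iff.mp hset c).mp hc
  have ha : IsAtomOf M a := (Set.ext_iff.mp hset a).mpr (Or.inl rfl)
  have hb : IsAtomOf M b := (Set.ext_iff.mp hset b).mpr (Or.inr rfl)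
  refine ⟨⟨ha, fun hp => hab.ne' (hp.eq_of_isAtomOf hpos hb), ?_⟩,
    ⟨hb, fun hp => hab.ne (hp.eq_of_isAtomOf hpos ha), ?_⟩⟩
  · intro z1 z2 hrel hirr _ haz
    have hcard := card_mul_eq_card_mul_of_forall_isAtomOf hpos h2 hrel hirr haz
    have hz1 : (0 : ℚ) < card z1 := by exact_mod_cast card_pos_iff_exists_mem.mpr ⟨a, haz⟩
    have : (card z2 : ℚ) < card z1 := by nlinarith [hb.pos hpos]
    exact_mod_cast this
  · intro z1 z2 hrel hirr _ hbz
    have hcard := card_mul_eq_card_mul_of_forall_isAtomOf hpos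
      (fun c hc => (h2 c hc).symm) hrel hirr hbz
    have hz1 : (0 : ℚ) < card z1 := by exact_mod_cast card_pos_iff_exists_mem.mpr ⟨b, hbz⟩
    have : (card z1 : ℚ) < card z2 := by nlinarith [ha.pos hpos]
    exact_mod_cast this

end

/-- An atomic Puiseux monoid `M` has both a purely long and a purely short
atom if and only if it has exactly two atoms; in that case the smaller atom is the unique
purely long atom and the larger atom is the unique purely short atom. -/
theorem stmt15 (hpos : ∀ x ∈ M, 0 ≤ x) (hat : Atomic M) :
    (((∃ a, PurelyLong M a) ∧ (∃ a, PurelyShort M a)) ↔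
        {a | IsAtomOf M a}.encard = 2) ∧
      ∀ a b : ℚ, IsAtomOf M a → IsAtomOf M b → a < b →
        {c | IsAtomOf M c} = {a, b} →
        {c | PurelyLong M c} = {a} ∧ {c | PurelyShort M c} = {b} := by
  refine ⟨⟨fun ⟨⟨a, ha⟩, ⟨b, hb⟩⟩ => ?_, fun h => ?_⟩, fun a b _ _ hab hset => ?_⟩
  · rw [setOf_isAtomOf_eq_pair hpos ha hb]
    exact Set.encard_pair (ha.ne_of_purelyShort hpos hat hb)
  · obtain ⟨a, b, hne, hset⟩ := Set.encard_eq_two.mp h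
    rcases hne.lt_or_gt with hab | hab
    · obtain ⟨hLa, hSb⟩ := purelyLong_and_purelyShort_of_setOf_isAtomOf_eq_pair hpos hab hset
      exact ⟨⟨a, hLa⟩, ⟨b, hSb⟩⟩
    · rw [Set.pair_comm] at hset
      obtain ⟨hLb, hSa⟩ := purelyLong_and_purelyShort_of_setOf_isAtomOf_eq_pair hpos hab hset
      exact ⟨⟨b, hLb⟩, ⟨a, hSa⟩⟩
  · obtain ⟨hLa, hSb⟩ := purelyLong_and_purelyShort_of_setOf_isAtomOf_eq_pair hpos hab hset
    constructor
    · refine Set.eq_singleton_iff_unique_mem.mpr ⟨hLa, fun c hc => ?_⟩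
      exact ((eq_or_eq_of_purelyLong_of_purelyShort hpos hc hSb hLa.1).resolve_right hab.ne).symm
    · refine Set.eq_singleton_iff_unique_mem.mpr ⟨hSb, fun c hc => ?_⟩
      exact ((eq_or_eq_of_purelyLong_of_purelyShort hpos hLa hc hSb.1).resolve_left hab.ne').symm

end LF
end

section
/- Let M be an atomic Puiseux monoid. Then M is a proper length-factorial monoid if and only if |A(M)| = 2. -/
open Multiset

namespace LF

variable (M : AddSubmonoid ℚ)

lemma msum_pos (s : Multiset ℚ) (h : ∀ a ∈ s, 0 < a) (hs : s ≠ 0) : 0 < s.sum := by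
  induction s using Multiset.induction with
  | empty => simp at hs
  | cons x t ih =>
    rcases eq_or_ne t 0 with rfl | ht
    · simpa using h x (by simp)
    · have := ih (fun a ha => h a (Multiset.mem_cons_of_mem ha)) ht
      have hx := h x (Multiset.mem_cons_self x t)
      simp only [Multiset.sum_cons]; linarith

lemma atom_pos (hpos : ∀ x ∈ M, 0 ≤ x) {a : ℚ} (h : IsAtomOf M a) : 0 < a :=
  lt_of_le_of_ne (hpos a h.1) (Ne.symm h.2.1)

lemma repl_decomp {a b : ℚ} (hab : a ≠ b) {s : Multiset ℚ} (h : ∀ x ∈ s, x = a ∨ x = b) :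
    s = replicate (count a s) a + replicate (count b s) b := by
  induction s using Multiset.induction with
  | empty => simp
  | cons x t ih =>
    have ht := ih (fun y hy => h y (Multiset.mem_cons_of_mem hy))
    rcases h x (Multiset.mem_cons_self x t) with rfl | rfl
    · rw [count_cons_self, count_cons_of_ne (Ne.symm hab), replicate_succ, cons_add, ← ht]
    · rw [count_cons_self, count_cons_of_ne hab, replicate_succ, add_comm,
        cons_add, add_comm, ← ht]

lemma num_cast (q : ℚ) : ((q.num : ℤ) : ℚ) = q * q.den := by
  exact_mod_cast (Rat.mul_den_eq_num q).symm

lemma toNat_cast (x : ℤ) : ((x.toNat : ℕ) : ℚ) = (((-x).toNat : ℕ) : ℚ) + (x : ℚ) := by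
  have hz : (x.toNat : ℤ) = ((-x).toNat : ℤ) + x := by omega
  exact_mod_cast hz

lemma lf_of_two {a b : ℚ} (hab : a ≠ b)
    (hsub : ∀ x, IsAtomOf M x → x = a ∨ x = b) : LengthFactorial M := by
  intro x hx s hs t ht hcard
  have hds := repl_decomp hab (fun y hy => hsub y (hs.1 y hy))
  have hdt := repl_decomp hab (fun y hy => hsub y (ht.1 y hy))
  set m1 := count a s with hm1
  set n1 := count b s with hn1
  set m2 := count a t with hm2
  set n2 := count b t with hn2
  have hsum : (m1 : ℚ) * a + n1 * b = (m2 : ℚ) * a + n2 * b := by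
    have h1 : s.sum = (m1 : ℚ) * a + n1 * b := by
      rw [hds]; simp [Multiset.sum_replicate, nsmul_eq_mul]
    have h2 : t.sum = (m2 : ℚ) * a + n2 * b := by
      rw [hdt]; simp [Multiset.sum_replicate, nsmul_eq_mul]
    rw [← h1, ← h2, hs.2, ht.2]
  have hc : m1 + n1 = m2 + n2 := by
    have := hcard
    rw [hds, hdt] at this
    simpa using this
  have hcq : (m1 : ℚ) + n1 = (m2 : ℚ) + n2 := by exact_mod_cast hc
  have key : ((m1 : ℚ) - m2) * (a - b) = 0 := by linear_combination hsum - hcq * b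
  have hm : m1 = m2 := by
    rcases mul_eq_zero.1 key with h | h
    · exact_mod_cast sub_eq_zero.1 h
    · exact absurd (sub_eq_zero.1 h) hab
  have hn : n1 = n2 := by omega
  rw [hds, hdt, hm, hn]

lemma not_factorial (hpos : ∀ x ∈ M, 0 ≤ x) {a b : ℚ} (hab : a ≠ b)
    (ha : IsAtomOf M a) (hb : IsAtomOf M b) : ¬ Factorial M := by
  have hapos : 0 < a := atom_pos M hpos ha
  have hbpos : 0 < b := atom_pos M hpos hb
  set m : ℕ := a.den * b.num.toNat with hm
  set n : ℕ := b.den * a.num.toNat with hn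
  have hanum : ((a.num.toNat : ℕ) : ℚ) = (a.num : ℚ) := by
    exact_mod_cast congrArg (Int.cast : ℤ → ℚ) (Int.toNat_of_nonneg (Rat.num_pos.2 hapos).le)
  have hbnum : ((b.num.toNat : ℕ) : ℚ) = (b.num : ℚ) := by
    exact_mod_cast congrArg (Int.cast : ℤ → ℚ) (Int.toNat_of_nonneg (Rat.num_pos.2 hbpos).le)
  set s : Multiset ℚ := replicate m a with hs
  set t : Multiset ℚ := replicate n b with ht
  have hsum : s.sum = t.sum := by
    rw [hs, ht, Multiset.sum_replicate, Multiset.sum_replicate, nsmul_eq_mul, nsmul_eq_mul,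
      hm, hn]
    push_cast [hanum, hbnum]
    rw [num_cast a, num_cast b]; ring
  have hsM : s.sum ∈ M := AddSubmonoid.multiset_sum_mem M s
    (fun y hy => by
      have hy' : y ∈ replicate m a := by rwa [← hs]
      rw [Multiset.eq_of_mem_replicate hy']; exact ha.1)
  have hsF : s ∈ FactorsOf M s.sum :=
    ⟨fun y hy => by
      have hy' : y ∈ replicate m a := by rwa [← hs]
      rw [Multiset.eq_of_mem_replicate hy']; exact ha, rfl⟩
  have htF : t ∈ FactorsOf M s.sum :=
    ⟨fun y hy => by
      have hy' : y ∈ replicate n b := by rwa [← ht]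
      rw [Multiset.eq_of_mem_replicate hy']; exact hb, hsum.symm⟩
  intro hfac
  obtain ⟨u, -, huniq⟩ := hfac s.sum hsM
  have hst : s = t := (huniq s hsF).trans (huniq t htF).symm
  have hm0 : 0 < m := by
    have h1 : (0:ℤ) < b.num := Rat.num_pos.2 hbpos
    have h2 := a.den_pos
    rw [hm]
    have h3 : 0 < b.num.toNat := by omega
    exact Nat.mul_pos h2 h3
  have : count a s = count a t := by rw [hst]
  rw [hs, ht, Multiset.count_replicate_self, Multiset.count_replicate] at this
  rw [if_neg (Ne.symm hab)] at this
  omega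

lemma no_third_atom (hlf : LengthFactorial M) {a b c : ℚ}
    (ha : IsAtomOf M a) (hb : IsAtomOf M b) (hc : IsAtomOf M c)
    (hab : a ≠ b) (hca : c ≠ a) (hcb : c ≠ b) : False := by
  set A : ℤ := (b-c).num * ((c-a).den * (a-b).den) with hAdef
  set B : ℤ := (c-a).num * ((b-c).den * (a-b).den) with hBdef
  set C : ℤ := (a-b).num * ((b-c).den * (c-a).den) with hCdef
  set N : ℚ := ((b-c).den : ℚ) * ((c-a).den : ℚ) * ((a-b).den : ℚ) with hNdef
  have hA : (A : ℚ) = N * (b-c) := by rw [hAdef, hNdef]; push_cast; rw [num_cast]; ring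
  have hB : (B : ℚ) = N * (c-a) := by rw [hBdef, hNdef]; push_cast; rw [num_cast]; ring
  have hC : (C : ℚ) = N * (a-b) := by rw [hCdef, hNdef]; push_cast; rw [num_cast]; ring
  have hsum0 : (A:ℚ)*a + (B:ℚ)*b + (C:ℚ)*c = 0 := by rw [hA, hB, hC]; ring
  have habc : A + B + C = 0 := by
    have h : ((A:ℚ) + (B:ℚ) + (C:ℚ)) = 0 := by rw [hA, hB, hC]; ring
    exact_mod_cast h
  have hN : 0 < N := by
    rw [hNdef]
    have h1 : (0:ℚ) < ((b-c).den : ℚ) := by exact_mod_cast (b-c).den_pos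
    have h2 : (0:ℚ) < ((c-a).den : ℚ) := by exact_mod_cast (c-a).den_pos
    have h3 : (0:ℚ) < ((a-b).den : ℚ) := by exact_mod_cast (a-b).den_pos
    exact mul_pos (mul_pos h1 h2) h3
  have hC0 : C ≠ 0 := by
    intro h
    have h' : (C:ℚ) = 0 := by exact_mod_cast h
    rw [hC] at h'
    rcases mul_eq_zero.1 h' with h'' | h''
    · exact hN.ne' h''
    · exact hab (sub_eq_zero.1 h'')
  set s : Multiset ℚ := replicate A.toNat a + replicate B.toNat b + replicate C.toNat c
    with hsdef
  set t : Multiset ℚ := replicate (-A).toNat a + replicate (-B).toNat b + replicate (-C).toNat c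
    with htdef
  have hmem_s : ∀ y ∈ s, y = a ∨ y = b ∨ y = c := by
    intro y hy
    rw [hsdef] at hy
    simp only [Multiset.mem_add, Multiset.mem_replicate] at hy
    tauto
  have hmem_t : ∀ y ∈ t, y = a ∨ y = b ∨ y = c := by
    intro y hy
    rw [htdef] at hy
    simp only [Multiset.mem_add, Multiset.mem_replicate] at hy
    tauto
  have hatom_s : ∀ y ∈ s, IsAtomOf M y := by
    intro y hy; rcases hmem_s y hy with rfl | rfl | rfl <;> assumption
  have hatom_t : ∀ y ∈ t, IsAtomOf M y := by
    intro y hy; rcases hmem_t y hy with rfl | rfl | rfl <;> assumption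
  have hssum : s.sum = (A.toNat : ℚ) * a + (B.toNat : ℚ) * b + (C.toNat : ℚ) * c := by
    rw [hsdef]; simp [Multiset.sum_replicate, nsmul_eq_mul]
  have htsum : t.sum = ((-A).toNat : ℚ) * a + ((-B).toNat : ℚ) * b + ((-C).toNat : ℚ) * c := by
    rw [htdef]; simp [Multiset.sum_replicate, nsmul_eq_mul]
  have hsums : s.sum = t.sum := by
    rw [hssum, htsum, toNat_cast A, toNat_cast B, toNat_cast C]
    linear_combination hsum0
  have hcard : card s = card t := by
    rw [hsdef, htdef]
    simp only [Multiset.card_add, Multiset.card_replicate]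
    omega
  have hxM : s.sum ∈ M := AddSubmonoid.multiset_sum_mem M s (fun y hy => (hatom_s y hy).1)
  have hst : s = t :=
    hlf s.sum hxM s ⟨hatom_s, rfl⟩ t ⟨hatom_t, hsums.symm⟩ hcard
  have hcount : count c s = count c t := by rw [hst]
  rw [hsdef, htdef] at hcount
  simp [Multiset.count_replicate, Ne.symm hca, Ne.symm hcb] at hcount
  omega

/-- An atomic Puiseux monoid is a proper length-factorial monoid if and only
if it has exactly two atoms. -/
theorem stmt16 (hpos : ∀ x ∈ M, 0 ≤ x) (hat : Atomic M) :
    (LengthFactorial M ∧ ¬ Factorial M) ↔ {a | IsAtomOf M a}.encard = 2 := by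
  constructor
  · rintro ⟨hlf, hnf⟩
    rw [Factorial] at hnf; push_neg at hnf
    obtain ⟨x, hxM, hx⟩ := hnf
    have hxne : x ≠ 0 := by
      rintro rfl
      apply hx
      refine ⟨0, ⟨by simp, by simp⟩, ?_⟩
      rintro u ⟨hu1, hu2⟩
      by_contra hne
      have := msum_pos u (fun y hy => atom_pos M hpos (hu1 y hy)) hne
      rw [hu2] at this
      exact lt_irrefl 0 this
    obtain ⟨s, hsF⟩ := hat x hxM hxne
    have hex : ∃ t ∈ FactorsOf M x, t ≠ s := by
      by_contra h; push_neg at h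
      exact hx ⟨s, hsF, fun y hy => h y hy⟩
    obtain ⟨t, htF, hts⟩ := hex
    have h2 : ∃ a b, IsAtomOf M a ∧ IsAtomOf M b ∧ a ≠ b := by
      by_contra h; push_neg at h
      have hsne : s ≠ 0 := by
        rintro rfl
        apply hxne
        rw [← hsF.2]; simp
      obtain ⟨a, haS⟩ := Multiset.exists_mem_of_ne_zero hsne
      have ha := hsF.1 a haS
      have hs_eq : s = replicate (card s) a :=
        Multiset.eq_replicate_card.2 (fun y hy => h y a (hsF.1 y hy) ha)
      have ht_eq : t = replicate (card t) a :=
        Multiset.eq_replicate_card.2 (fun y hy => h y a (htF.1 y hy) ha)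
      have hq : (card s : ℚ) * a = (card t : ℚ) * a := by
        have e1 : s.sum = (card s : ℚ) * a := by
          rw [hs_eq]; simp [Multiset.sum_replicate, nsmul_eq_mul]
        have e2 : t.sum = (card t : ℚ) * a := by
          rw [ht_eq]; simp [Multiset.sum_replicate, nsmul_eq_mul]
        rw [← e1, ← e2, hsF.2, htF.2]
      have hcc : (card s : ℚ) = (card t : ℚ) := mul_right_cancel₀ ha.2.1 hq
      have hcc' : card s = card t := by exact_mod_cast hcc
      apply hts
      rw [hs_eq, ht_eq, hcc']
    obtain ⟨a, b, ha, hb, hab⟩ := h2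
    have hall : ∀ c, IsAtomOf M c → c = a ∨ c = b := by
      intro c hc
      by_contra h; push_neg at h
      exact no_third_atom M hlf ha hb hc hab h.1 h.2
    have hset : {a' | IsAtomOf M a'} = {a, b} := by
      ext y
      simp only [Set.mem_setOf_eq, Set.mem_insert_iff, Set.mem_singleton_iff]
      constructor
      · exact hall y
      · rintro (rfl | rfl) <;> assumption
    rw [hset]
    exact Set.encard_pair hab
  · intro h2
    obtain ⟨a, b, hab, hset⟩ := Set.encard_eq_two.1 h2
    have ha : IsAtomOf M a := by
      have : a ∈ {x | IsAtomOf M x} := by rw [hset]; exact Set.mem_insert a {b}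
      exact this
    have hb : IsAtomOf M b := by
      have : b ∈ {x | IsAtomOf M x} := by
        rw [hset]; exact Set.mem_insert_of_mem a rfl
      exact this
    refine ⟨lf_of_two M hab ?_, not_factorial M hpos hab ha hb⟩
    intro x hx
    have : x ∈ ({a, b} : Set ℚ) := by rw [← hset]; exact hx
    simpa using this

end LF
end
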